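/- Let E, E', E'' be real normed vector spaces, U ⊆ E and U' ⊆ E' open sets, f : E → E' with f(U) ⊆ U', and g : E' → E''. Let F_f be a slope extension of f on U, F_g a slope extension of g on U', and F_{g∘f} a slope extension of g ∘ f on U. Then for every (x, v, t) ∈ U^[1], the element (f(x), F_f(x,v,t), t) lies in U'^[1] and the chain rule for extended slopes holds: F_{g∘f}(x, v, t) = F_g(f(x), F_f(x,v,t), t). -/

import Mathlib

/-!
Slope extensions of a map on an open set are unique, because the points of `U^[1]` with
`t ≠ 0` are dense in `U^[1]` and there all slope extensions are given by the difference quotient.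
Since `f x + t • F_f(x, v, t) = f (x + t • v)` for `t ≠ 0`, the map
`(x, v, t) ↦ F_g(f x, F_f(x, v, t), t)` is a slope extension of `g ∘ f`, hence equals `F_{g∘f}`.
-/

open Topology Filter Set

/-- A slope extension of `h` on `U`. -/
def IsSlopeExt {E W : Type*} [NormedAddCommGroup E] [NormedSpace ℝ E]
    [NormedAddCommGroup W] [NormedSpace ℝ W]
    (h : E → W) (U : Set E) (F : E × E × ℝ → W) : Prop :=
  ContinuousOn F {p : E × E × ℝ | p.1 ∈ U ∧ p.1 + p.2.2 • p.2.1 ∈ U} ∧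
  ∀ p : E × E × ℝ, p.1 ∈ U → p.1 + p.2.2 • p.2.1 ∈ U → p.2.2 ≠ 0 →
    F p = (p.2.2)⁻¹ • (h (p.1 + p.2.2 • p.2.1) - h p.1)

section ExtDomain

variable {E : Type*} [AddCommGroup E] [Module ℝ E]

/-- The first extended domain `U^[1]`. -/
def extDomain (U : Set E) : Set (E × E × ℝ) :=
  {p | p.1 ∈ U ∧ p.1 + p.2.2 • p.2.1 ∈ U}

theorem extDomain_subset_closure [TopologicalSpace E] [ContinuousAdd E] [ContinuousSMul ℝ E]
    {U : Set E} (hU : IsOpen U) :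
    extDomain U ⊆ closure {p ∈ extDomain U | p.2.2 ≠ 0} := by
  rintro ⟨x, v, t⟩ ⟨hx, hxv⟩
  obtain rfl | ht := eq_or_ne t 0
  · have hline : Tendsto (fun s : ℝ => (x, v, s)) (𝓝[≠] 0) (𝓝 (x, v, 0)) :=
      ((by fun_prop : Continuous fun s : ℝ => (x, v, s)).tendsto 0).mono_left nhdsWithin_le_nhds
    have hnear : ∀ᶠ s : ℝ in 𝓝 0, x + s • v ∈ U := by
      refine (hU.preimage (by fun_prop)).mem_nhds ?_
      simpa using hx
    refine mem_closure_of_tendsto hline ?_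
    filter_upwards [nhdsWithin_le_nhds hnear, self_mem_nhdsWithin] with s hs hs0
    exact ⟨⟨hx, hs⟩, hs0⟩
  · exact subset_closure ⟨⟨hx, hxv⟩, ht⟩

end ExtDomain

namespace IsSlopeExt

variable {E E' W : Type*} [NormedAddCommGroup E] [NormedSpace ℝ E]
  [NormedAddCommGroup E'] [NormedSpace ℝ E'] [NormedAddCommGroup W] [NormedSpace ℝ W]
  {h : E → W} {U : Set E} {F : E × E × ℝ → W}

theorem continuousOn_extDomain (hF : IsSlopeExt h U F) : ContinuousOn F (extDomain U) :=
  hF.1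

theorem apply_of_ne_zero (hF : IsSlopeExt h U F) {p : E × E × ℝ} (hp : p ∈ extDomain U)
    (ht : p.2.2 ≠ 0) : F p = (p.2.2)⁻¹ • (h (p.1 + p.2.2 • p.2.1) - h p.1) :=
  hF.2 p hp.1 hp.2 ht

theorem add_smul_apply (hF : IsSlopeExt h U F) {p : E × E × ℝ} (hp : p ∈ extDomain U)
    (ht : p.2.2 ≠ 0) : h p.1 + p.2.2 • F p = h (p.1 + p.2.2 • p.2.1) := by
  rw [hF.apply_of_ne_zero hp ht, smul_inv_smul₀ ht, add_sub_cancel]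

/-- `h y = h x + F (x, y - x, 1)` exhibits `h` near `x` as a continuous function of `y`. -/
theorem continuousOn (hF : IsSlopeExt h U F) : ContinuousOn h U := by
  intro x hx
  have hmaps : MapsTo (fun y => (x, y - x, (1 : ℝ))) U (extDomain U) := fun y hy =>
    ⟨hx, by simpa using hy⟩
  have hslope : ContinuousWithinAt (fun y => h x + F (x, y - x, 1)) U x :=
    (continuousOn_const.add
      (hF.continuousOn_extDomain.comp (by fun_prop) hmaps)).continuousWithinAt hx
  have hformula : EqOn h (fun y => h x + F (x, y - x, 1)) U := fun y hy => by
    simpa using (hF.add_smul_apply (p := (x, y - x, 1)) (hmaps hy) one_ne_zero).symm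
  exact hslope.congr_of_mem hformula hx

theorem eqOn (hU : IsOpen U) (hF : IsSlopeExt h U F) {G : E × E × ℝ → W}
    (hG : IsSlopeExt h U G) : EqOn F G (extDomain U) :=
  EqOn.of_subset_closure (fun p hp => by rw [hF.apply_of_ne_zero hp.1 hp.2,
      hG.apply_of_ne_zero hp.1 hp.2])
    hF.continuousOn_extDomain hG.continuousOn_extDomain (fun _ hp => hp.1)
    (extDomain_subset_closure hU)

theorem mapsTo_extDomain {f : E → E'} {U' : Set E'} {Ff : E × E × ℝ → E'}
    (hFf : IsSlopeExt f U Ff) (hf : MapsTo f U U') :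
    MapsTo (fun p => (f p.1, Ff p, p.2.2)) (extDomain U) (extDomain U') := by
  intro p hp
  refine ⟨hf hp.1, ?_⟩
  obtain ht | ht := eq_or_ne p.2.2 0
  · simpa [ht] using hf hp.1
  · simpa only [hFf.add_smul_apply hp ht] using hf hp.2

theorem comp {f : E → E'} {U' : Set E'} {Ff : E × E × ℝ → E'} {g : E' → W}
    {Fg : E' × E' × ℝ → W} (hFg : IsSlopeExt g U' Fg) (hf : MapsTo f U U')
    (hFf : IsSlopeExt f U Ff) :
    IsSlopeExt (g ∘ f) U (fun p => Fg (f p.1, Ff p, p.2.2)) := by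
  refine ⟨?_, fun p hx hxv ht => ?_⟩
  · have hinner : ContinuousOn (fun p : E × E × ℝ => (f p.1, Ff p, p.2.2)) (extDomain U) :=
      ((hFf.continuousOn.comp continuousOn_fst fun _ hp => hp.1).prodMk
        (hFf.continuousOn_extDomain.prodMk (by fun_prop)))
    exact hFg.continuousOn_extDomain.comp hinner (hFf.mapsTo_extDomain hf)
  · change Fg (f p.1, Ff p, p.2.2) = _
    rw [hFg.apply_of_ne_zero (hFf.mapsTo_extDomain hf ⟨hx, hxv⟩) ht,
      hFf.add_smul_apply ⟨hx, hxv⟩ ht]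
    rfl

end IsSlopeExt

theorem slope_extension_chain_rule_general {E E' E'' : Type*}
    [NormedAddCommGroup E] [NormedSpace ℝ E]
    [NormedAddCommGroup E'] [NormedSpace ℝ E']
    [NormedAddCommGroup E''] [NormedSpace ℝ E'']
    (U : Set E) (U' : Set E') (hU : IsOpen U)
    (f : E → E') (hf : Set.MapsTo f U U') (g : E' → E'')
    (Ff : E × E × ℝ → E') (hFf : IsSlopeExt f U Ff)
    (Fg : E' × E' × ℝ → E'') (hFg : IsSlopeExt g U' Fg)
    (Fgf : E × E × ℝ → E'') (hFgf : IsSlopeExt (g ∘ f) U Fgf) :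
    ∀ (x v : E) (t : ℝ), x ∈ U → x + t • v ∈ U →
      ((f x ∈ U' ∧ f x + t • Ff (x, v, t) ∈ U') ∧
        Fgf (x, v, t) = Fg (f x, Ff (x, v, t), t)) :=
  fun x v t hx hxv =>
    have hxvt : (x, v, t) ∈ extDomain U := ⟨hx, hxv⟩
    ⟨hFf.mapsTo_extDomain hf hxvt, hFgf.eqOn hU (hFg.comp hf hFf) hxvt⟩

/-- Chain rule for extended slopes:
`F_{g∘f}(x, v, t) = F_g(f(x), F_f(x,v,t), t)` on `U^[1]`. -/
theorem slope_extension_chain_rule {E E' E'' : Type*}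
    [NormedAddCommGroup E] [NormedSpace ℝ E]
    [NormedAddCommGroup E'] [NormedSpace ℝ E']
    [NormedAddCommGroup E''] [NormedSpace ℝ E'']
    (U : Set E) (U' : Set E') (hU : IsOpen U) (hU' : IsOpen U')
    (f : E → E') (hf : Set.MapsTo f U U') (g : E' → E'')
    (Ff : E × E × ℝ → E') (hFf : IsSlopeExt f U Ff)
    (Fg : E' × E' × ℝ → E'') (hFg : IsSlopeExt g U' Fg)
    (Fgf : E × E × ℝ → E'') (hFgf : IsSlopeExt (g ∘ f) U Fgf) :
    ∀ (x v : E) (t : ℝ), x ∈ U → x + t • v ∈ U →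
      ((f x ∈ U' ∧ f x + t • Ff (x, v, t) ∈ U') ∧
        Fgf (x, v, t) = Fg (f x, Ff (x, v, t), t)) :=
  slope_extension_chain_rule_general U U' hU f hf g Ff hFf Fg hFg Fgf hFgf
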